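/- Let θ ∈ ℝ with ρ = θ/(2π) irrational, and let ξ, η be positive integers with ξ + η = 2n for a positive integer n, satisfying {ξρ} ≤ {nρ} ≤ {ηρ}. Set ε = {ξρ}, ι = 1 − {ηρ}, and σ = (−1)^{⌊ξρ⌋} (which equals (−1)^{⌊ηρ⌋}). Then (ε + ι)(τ_0 + τ_{2n}) + σ (ε − ι)(τ_ξ + τ_η) = 4π² (ε − ι) ι if ε > ι, and (ε + ι)(τ_0 + τ_{2n}) + σ (ε − ι)(τ_ξ + τ_η) = 4π² (ι − ε) ε if ε < ι. -/

import Mathlib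

open Real

/-- `τ_p = Σ_{k ∈ ℤ} (k − 1/2)⁻² cos(p (k − 1/2) θ)`. -/
noncomputable def tau (θ : ℝ) (p : ℤ) : ℝ :=
  ∑' k : ℤ, (((k : ℝ) - 1 / 2) ^ 2)⁻¹ * Real.cos ((p : ℝ) * ((k : ℝ) - 1 / 2) * θ)


lemma B2_eval (x : ℝ) :
    (Polynomial.map (algebraMap ℚ ℝ) (Polynomial.bernoulli 2)).eval x = x ^ 2 - x + 1 / 6 := by
  have h2 : bernoulli 2 = 1 / 6 := by
    rw [bernoulli_eq_bernoulli'_of_ne_one (by norm_num), bernoulli'_two]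
  simp [Polynomial.bernoulli, Finset.sum_range_succ, bernoulli_one, bernoulli_zero, h2]
  ring

lemma hasSum_F {x : ℝ} (hx : x ∈ Set.Icc (0:ℝ) 1) :
    HasSum (fun n : ℕ => 1 / (n : ℝ) ^ 2 * Real.cos (2 * π * n * x))
      (π ^ 2 * (x ^ 2 - x + 1 / 6)) := by
  have h := hasSum_one_div_nat_pow_mul_cos (k := 1) one_ne_zero hx
  norm_num at h
  have hb : (Polynomial.aeval x) (Polynomial.bernoulli 2) = x ^ 2 - x + 1 / 6 := by
    rw [Polynomial.aeval_def, ← Polynomial.eval_map, B2_eval]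
  rw [hb, show (2 * π) ^ 2 / 2 / 2 * (x ^ 2 - x + 1 / 6) = π ^ 2 * (x ^ 2 - x + 1 / 6) by ring]
    at h
  simpa only [one_div] using h

lemma hasSum_Fper (y : ℝ) :
    HasSum (fun n : ℕ => 1 / (n : ℝ) ^ 2 * Real.cos (2 * π * n * y))
      (π ^ 2 * (Int.fract y ^ 2 - Int.fract y + 1 / 6)) := by
  have hx : Int.fract y ∈ Set.Icc (0:ℝ) 1 :=
    ⟨Int.fract_nonneg y, (Int.fract_lt_one y).le⟩
  have hc : ∀ n : ℕ, Real.cos (2 * π * n * y) = Real.cos (2 * π * n * Int.fract y) := by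
    intro n
    have e : 2 * π * n * y = 2 * π * n * Int.fract y + ((n * ⌊y⌋ : ℤ) : ℝ) * (2 * π) := by
      rw [Int.fract]; push_cast; ring
    rw [e, Real.cos_add_int_mul_two_pi]
  simpa only [hc] using hasSum_F hx



lemma hasSum_halfodd (y : ℝ) :
    HasSum (fun m : ℕ => (((m : ℝ) + 1 / 2) ^ 2)⁻¹ * Real.cos (2 * π * ((m : ℝ) + 1 / 2) * y))
      (4 * (π ^ 2 * (Int.fract (y / 2) ^ 2 - Int.fract (y / 2) + 1 / 6))
        - π ^ 2 * (Int.fract y ^ 2 - Int.fract y + 1 / 6)) := by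
  set F1 : ℝ := π ^ 2 * (Int.fract y ^ 2 - Int.fract y + 1 / 6) with hF1def
  set F2 : ℝ := π ^ 2 * (Int.fract (y / 2) ^ 2 - Int.fract (y / 2) + 1 / 6) with hF2def
  set f : ℕ → ℝ := fun n => 1 / (n : ℝ) ^ 2 * Real.cos (2 * π * n * (y / 2)) with hfdef
  have hF2 : HasSum f F2 := hasSum_Fper (y / 2)
  have hF1 : HasSum (fun n : ℕ => 1 / (n : ℝ) ^ 2 * Real.cos (2 * π * n * y)) F1 := hasSum_Fper y
  have heven : HasSum (fun k : ℕ => f (2 * k)) (F1 / 4) := by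
    have h4 := hF1.div_const 4
    have he : (fun k : ℕ => f (2 * k))
        = fun k : ℕ => (1 / (k : ℝ) ^ 2 * Real.cos (2 * π * k * y)) / 4 := by
      funext k
      simp only [hfdef]
      have hc : 2 * π * ((2 * k : ℕ) : ℝ) * (y / 2) = 2 * π * k * y := by push_cast; ring
      rw [hc]
      push_cast
      ring
    rw [he]; exact h4
  have hodd_s : Summable fun k : ℕ => f (2 * k + 1) :=
    hF2.summable.comp_injective fun a b hab => by omega
  have hodd : HasSum (fun k : ℕ => f (2 * k + 1)) (F2 - F1 / 4) := by
    have h := hodd_s.hasSum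
    have htot := heven.even_add_odd h
    have huniq := htot.unique hF2
    have he : ∑' k : ℕ, f (2 * k + 1) = F2 - F1 / 4 := by linarith
    rwa [he] at h
  have hfin := hodd.mul_left 4
  have he2 : (fun m : ℕ => (((m : ℝ) + 1 / 2) ^ 2)⁻¹ * Real.cos (2 * π * ((m : ℝ) + 1 / 2) * y))
      = fun k : ℕ => 4 * f (2 * k + 1) := by
    funext k
    simp only [hfdef]
    have hc : 2 * π * ((2 * k + 1 : ℕ) : ℝ) * (y / 2) = 2 * π * ((k : ℝ) + 1 / 2) * y := by
      push_cast; ring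
    rw [hc]
    have hne2 : ((k : ℝ) + 1 / 2) ≠ 0 := by positivity
    have hne : ((2 * k + 1 : ℕ) : ℝ) ≠ 0 := by positivity
    have hkey : (((k : ℝ) + 1 / 2) ^ 2)⁻¹ = 4 * (1 / ((2 * k + 1 : ℕ) : ℝ) ^ 2) := by
      have hne' : (2 * (k : ℝ) + 1) ≠ 0 := by positivity
      push_cast
      field_simp
      ring
    rw [hkey]
    ring
  rw [he2]
  convert hfin using 1
  exacts [rfl, by ring]



lemma sign_form (y : ℝ) :
    2 * (4 * (π ^ 2 * (Int.fract (y / 2) ^ 2 - Int.fract (y / 2) + 1 / 6))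
        - π ^ 2 * (Int.fract y ^ 2 - Int.fract y + 1 / 6))
      = π ^ 2 * (-1 : ℝ) ^ ⌊y⌋ * (1 - 2 * Int.fract y) := by
  have hfr0 : (0:ℝ) ≤ Int.fract y := Int.fract_nonneg y
  have hfr1 : Int.fract y < 1 := Int.fract_lt_one y
  rcases Int.even_or_odd ⌊y⌋ with ⟨m, hm⟩ | ⟨m, hm⟩
  · have hfl : Int.fract (y / 2) = Int.fract y / 2 := by
      have e : y / 2 = (m : ℝ) + Int.fract y / 2 := by
        have := Int.floor_add_fract y
        rw [hm] at this; push_cast at this ⊢; linarith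
      rw [e, Int.fract_intCast_add, Int.fract_eq_self.2 ⟨by linarith, by linarith⟩]
    rw [hfl, Even.neg_one_zpow ⟨m, hm⟩]
    ring
  · have hfl : Int.fract (y / 2) = (1 + Int.fract y) / 2 := by
      have e : y / 2 = (m : ℝ) + (1 + Int.fract y) / 2 := by
        have := Int.floor_add_fract y
        rw [hm] at this; push_cast at this ⊢; linarith
      rw [e, Int.fract_intCast_add, Int.fract_eq_self.2 ⟨by linarith, by linarith⟩]
    rw [hfl, Odd.neg_one_zpow ⟨m, hm⟩]
    ring

lemma tau_closed (ρ : ℝ) (p : ℤ) :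
    tau (2 * π * ρ) p = π ^ 2 * (-1 : ℝ) ^ ⌊(p : ℝ) * ρ⌋ * (1 - 2 * Int.fract ((p : ℝ) * ρ)) := by
  set y : ℝ := (p : ℝ) * ρ with hy
  set g : ℤ → ℝ :=
    fun k => (((k : ℝ) - 1 / 2) ^ 2)⁻¹ * Real.cos ((p : ℝ) * ((k : ℝ) - 1 / 2) * (2 * π * ρ))
    with hg
  set t : ℕ → ℝ :=
    fun m => (((m : ℝ) + 1 / 2) ^ 2)⁻¹ * Real.cos (2 * π * ((m : ℝ) + 1 / 2) * y) with ht
  set V : ℝ := 4 * (π ^ 2 * (Int.fract (y / 2) ^ 2 - Int.fract (y / 2) + 1 / 6))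
        - π ^ 2 * (Int.fract y ^ 2 - Int.fract y + 1 / 6) with hV
  have key : HasSum t V := hasSum_halfodd y
  have hneg : HasSum (fun m : ℕ => g (-(m : ℤ))) V := by
    have he : (fun m : ℕ => g (-(m : ℤ))) = t := by
      funext m
      simp only [hg, ht]
      rw [show ((-(m : ℤ) : ℤ) : ℝ) - 1 / 2 = -((m : ℝ) + 1 / 2) by push_cast; ring]
      rw [show (p : ℝ) * -((m : ℝ) + 1 / 2) * (2 * π * ρ)
          = -(2 * π * ((m : ℝ) + 1 / 2) * y) by rw [hy]; ring]
      rw [Real.cos_neg, neg_sq]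
    rw [he]; exact key
  have hpos1 : HasSum (fun m : ℕ => g ((m : ℤ) + 1)) V := by
    have he : (fun m : ℕ => g ((m : ℤ) + 1)) = t := by
      funext m
      simp only [hg, ht]
      rw [show (((m : ℤ) + 1 : ℤ) : ℝ) - 1 / 2 = (m : ℝ) + 1 / 2 by push_cast; ring]
      rw [show (p : ℝ) * ((m : ℝ) + 1 / 2) * (2 * π * ρ)
          = 2 * π * ((m : ℝ) + 1 / 2) * y by rw [hy]; ring]
    rw [he]; exact key
  have hpos : HasSum (fun m : ℕ => g (m : ℤ)) (V + g 0) := by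
    rw [← hasSum_nat_add_iff' 1]
    simp only [Finset.sum_range_one, Nat.cast_zero]
    have he : (fun m : ℕ => g ((m + 1 : ℕ) : ℤ)) = fun m : ℕ => g ((m : ℤ) + 1) := by
      funext m; norm_cast
    rw [he, show V + g 0 - g 0 = V by ring]
    exact hpos1
  have htotal : HasSum g (V + g 0 + V - g 0) := hpos.of_nat_of_neg hneg
  have : tau (2 * π * ρ) p = V + g 0 + V - g 0 := htotal.tsum_eq
  rw [this, show V + g 0 + V - g 0 = 2 * V by ring, hV]
  exact sign_form y

/-- The normalization combination in the exceptional case `ξ + η = 2n`: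
with `σ = (−1)^⌊ξρ⌋ = (−1)^⌊ηρ⌋`,
`(ε + ι)(τ₀ + τ_{2n}) + σ(ε − ι)(τ_ξ + τ_η)` equals `4π²(ε − ι)ι` if `ε > ι`
and `4π²(ι − ε)ε` if `ε < ι`. -/


theorem stmt_11 (θ ρ : ℝ) (hρ : ρ = θ / (2 * π)) (hirr : Irrational ρ)
    (ξ η n : ℤ) (hξ : 0 < ξ) (hη : 0 < η) (hn : 0 < n) (hsum : ξ + η = 2 * n)
    (h1 : Int.fract ((ξ : ℝ) * ρ) ≤ Int.fract ((n : ℝ) * ρ))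
    (h2 : Int.fract ((n : ℝ) * ρ) ≤ Int.fract ((η : ℝ) * ρ))
    (ε ι σ : ℝ) (hε : ε = Int.fract ((ξ : ℝ) * ρ)) (hι : ι = 1 - Int.fract ((η : ℝ) * ρ))
    (hσ : σ = (-1 : ℝ) ^ ⌊(ξ : ℝ) * ρ⌋) :
    σ = (-1 : ℝ) ^ ⌊(η : ℝ) * ρ⌋ ∧
    (ι < ε →
      (ε + ι) * (tau θ 0 + tau θ (2 * n)) + σ * (ε - ι) * (tau θ ξ + tau θ η) =
        4 * π ^ 2 * (ε - ι) * ι) ∧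
    (ε < ι →
      (ε + ι) * (tau θ 0 + tau θ (2 * n)) + σ * (ε - ι) * (tau θ ξ + tau θ η) =
        4 * π ^ 2 * (ι - ε) * ε) := by
  have hθ : θ = 2 * π * ρ := by
    rw [hρ]; field_simp
  subst hθ
  subst hε hι hσ
  set A := Int.fract ((ξ : ℝ) * ρ) with hA
  set B := Int.fract ((η : ℝ) * ρ) with hB
  set C := Int.fract ((n : ℝ) * ρ) with hC
  -- basic bounds
  have hA0 : (0:ℝ) ≤ A := Int.fract_nonneg _
  have hB1 : B < 1 := Int.fract_lt_one _
  have hC0 : (0:ℝ) ≤ C := Int.fract_nonneg _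
  have hC1 : C < 1 := Int.fract_lt_one _
  -- the integer relation
  have hcast : (ξ : ℝ) + (η : ℝ) = 2 * (n : ℝ) := by exact_mod_cast hsum
  have hz : A + B - 2 * C
      = ((2 * ⌊(n : ℝ) * ρ⌋ - ⌊(ξ : ℝ) * ρ⌋ - ⌊(η : ℝ) * ρ⌋ : ℤ) : ℝ) := by
    simp only [hA, hB, hC, Int.fract]
    push_cast
    linear_combination ρ * hcast
  have hm0 : (2 * ⌊(n : ℝ) * ρ⌋ - ⌊(ξ : ℝ) * ρ⌋ - ⌊(η : ℝ) * ρ⌋ : ℤ) = 0 := by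
    have hlt1 : ((2 * ⌊(n : ℝ) * ρ⌋ - ⌊(ξ : ℝ) * ρ⌋ - ⌊(η : ℝ) * ρ⌋ : ℤ) : ℝ) < 1 := by
      rw [← hz]; linarith
    have hgt1 : (-1 : ℝ) < ((2 * ⌊(n : ℝ) * ρ⌋ - ⌊(ξ : ℝ) * ρ⌋ - ⌊(η : ℝ) * ρ⌋ : ℤ) : ℝ) := by
      rw [← hz]; linarith
    have h1' : (2 * ⌊(n : ℝ) * ρ⌋ - ⌊(ξ : ℝ) * ρ⌋ - ⌊(η : ℝ) * ρ⌋ : ℤ) < 1 := by exact_mod_cast hlt1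
    have h2' : (-1 : ℤ) < (2 * ⌊(n : ℝ) * ρ⌋ - ⌊(ξ : ℝ) * ρ⌋ - ⌊(η : ℝ) * ρ⌋ : ℤ) := by
      exact_mod_cast hgt1
    omega
  have hAB : A + B = 2 * C := by
    have := hz; rw [hm0] at this; push_cast at this; linarith
  have hflη : ⌊(η : ℝ) * ρ⌋ = 2 * ⌊(n : ℝ) * ρ⌋ - ⌊(ξ : ℝ) * ρ⌋ := by omega
  -- sigma
  have hσne : ((-1 : ℝ) ^ ⌊(ξ : ℝ) * ρ⌋) ≠ 0 := zpow_ne_zero _ (by norm_num)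
  have hσ2 : ((-1 : ℝ) ^ ⌊(ξ : ℝ) * ρ⌋) * ((-1 : ℝ) ^ ⌊(ξ : ℝ) * ρ⌋) = 1 := by
    rw [← zpow_add₀ (by norm_num : (-1 : ℝ) ≠ 0)]
    exact Even.neg_one_zpow ⟨⌊(ξ : ℝ) * ρ⌋, rfl⟩
  have hσeq : ((-1 : ℝ) ^ ⌊(ξ : ℝ) * ρ⌋) = (-1 : ℝ) ^ ⌊(η : ℝ) * ρ⌋ := by
    rw [hflη, zpow_sub₀ (by norm_num : (-1 : ℝ) ≠ 0),
      Even.neg_one_zpow ⟨⌊(n : ℝ) * ρ⌋, two_mul _⟩, eq_div_iff hσne]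
    exact hσ2
  have ht0 : tau (2 * π * ρ) 0 = π ^ 2 := by
    rw [tau_closed]; norm_num
  have htξ : tau (2 * π * ρ) ξ
      = π ^ 2 * ((-1 : ℝ) ^ ⌊(ξ : ℝ) * ρ⌋) * (1 - 2 * A) := tau_closed ρ ξ
  have htη : tau (2 * π * ρ) η
      = π ^ 2 * ((-1 : ℝ) ^ ⌊(ξ : ℝ) * ρ⌋) * (1 - 2 * B) := by
    rw [tau_closed, hσeq]
  have hnC : (n : ℝ) * ρ = (⌊(n : ℝ) * ρ⌋ : ℝ) + C := by
    rw [hC, Int.fract]; ring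
  refine ⟨hσeq, ?_, ?_⟩
  · -- case ι < ε : C > 1/2
    intro hlt
    have hChalf : 1 < 2 * C := by rw [← hAB]; linarith
    have hfl2 : ⌊2 * ((n : ℝ) * ρ)⌋ = 2 * ⌊(n : ℝ) * ρ⌋ + 1 := by
      rw [Int.floor_eq_iff]
      constructor
      · push_cast; linarith
      · push_cast; linarith
    have hfr2 : Int.fract (2 * ((n : ℝ) * ρ)) = A + B - 1 := by
      rw [Int.fract, hfl2]; push_cast; linarith
    have ht2n : tau (2 * π * ρ) (2 * n) = π ^ 2 * (-1) * (1 - 2 * (A + B - 1)) := by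
      have := tau_closed ρ (2 * n)
      rw [show (((2 * n : ℤ) : ℝ)) * ρ = 2 * ((n : ℝ) * ρ) by push_cast; ring] at this
      rw [this, hfl2, hfr2, Odd.neg_one_zpow ⟨⌊(n : ℝ) * ρ⌋, rfl⟩]
    rw [ht0, ht2n, htξ, htη]
    linear_combination ((A + B - 1) * (π ^ 2 * (1 - 2 * A) + π ^ 2 * (1 - 2 * B))) * hσ2
  · -- case ε < ι : C < 1/2
    intro hlt
    have hChalf : 2 * C < 1 := by rw [← hAB]; linarith
    have hfl2 : ⌊2 * ((n : ℝ) * ρ)⌋ = 2 * ⌊(n : ℝ) * ρ⌋ := by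
      rw [Int.floor_eq_iff]
      constructor
      · push_cast; linarith
      · push_cast; linarith
    have hfr2 : Int.fract (2 * ((n : ℝ) * ρ)) = A + B := by
      rw [Int.fract, hfl2]; push_cast; linarith
    have ht2n : tau (2 * π * ρ) (2 * n) = π ^ 2 * 1 * (1 - 2 * (A + B)) := by
      have := tau_closed ρ (2 * n)
      rw [show (((2 * n : ℤ) : ℝ)) * ρ = 2 * ((n : ℝ) * ρ) by push_cast; ring] at this
      rw [this, hfl2, hfr2, Even.neg_one_zpow ⟨⌊(n : ℝ) * ρ⌋, two_mul _⟩]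
    rw [ht0, ht2n, htξ, htη]
    linear_combination ((A + B - 1) * (π ^ 2 * (1 - 2 * A) + π ^ 2 * (1 - 2 * B))) * hσ2
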